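/- arXiv:2505.01302 — 5 statements merged into one kernel-verified Lean document; each statement's English description precedes it below -/
import Mathlib

section
/- Let A₀ ∈ ℝ^{n×n} and B ∈ ℝ^{n×m}. If the pair (A₀, B) is controllable, then the augmented pair (Ā, B̄) is controllable, where Ā = [[A₀, B],[0_{m×n}, 0_{m×m}]] ∈ ℝ^{(n+m)×(n+m)} and B̄ = [[0_{n×m}],[I_m]] ∈ ℝ^{(n+m)×m}. -/
open Matrix

/-- A pair `(M, N)` with `M : k×k`, `N : k×l` is controllable if the controllability
matrix `[N, MN, …, M^{k−1}N]` has full rank `k`. -/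
def Controllable {K L : Type*} [Fintype K] [Fintype L] [DecidableEq K]
    (M : Matrix K K ℝ) (N : Matrix K L ℝ) : Prop :=
  (Matrix.of fun (i : K) (p : Fin (Fintype.card K) × L) => (M ^ (p.1 : ℕ) * N) i p.2).rank
    = Fintype.card K

lemma aux_rank_iff {K L : Type*} [Fintype K] [Fintype L] [DecidableEq K] (M : Matrix K L ℝ) :
    M.rank = Fintype.card K ↔ Function.Surjective M.mulVecLin := by
  rw [Matrix.rank, ← LinearMap.range_eq_top]
  constructor
  · intro h
    apply Submodule.eq_top_of_finrank_eq
    simpa using h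
  · intro h
    rw [h]
    simp

lemma aux_pow {n m : ℕ} (A₀ : Matrix (Fin n) (Fin n) ℝ) (B : Matrix (Fin n) (Fin m) ℝ) (p : ℕ) :
    (Matrix.fromBlocks A₀ B (0 : Matrix (Fin m) (Fin n) ℝ) (0 : Matrix (Fin m) (Fin m) ℝ)) ^ (p + 1) =
      Matrix.fromBlocks (A₀ ^ (p + 1)) (A₀ ^ p * B) 0 0 := by
  induction p with
  | zero => simp
  | succ k ih =>
    rw [pow_succ, ih, Matrix.fromBlocks_multiply]
    simp [← pow_succ]

lemma aux_pow_mul {n m : ℕ} (A₀ : Matrix (Fin n) (Fin n) ℝ) (B : Matrix (Fin n) (Fin m) ℝ)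
    (p : ℕ) :
    (Matrix.fromBlocks A₀ B (0 : Matrix (Fin m) (Fin n) ℝ) (0 : Matrix (Fin m) (Fin m) ℝ)) ^ (p + 1) *
        Matrix.fromRows (0 : Matrix (Fin n) (Fin m) ℝ) (1 : Matrix (Fin m) (Fin m) ℝ) =
      Matrix.fromRows (A₀ ^ p * B) 0 := by
  rw [aux_pow, Matrix.fromBlocks_mul_fromRows]
  simp

/-- If `(A₀, B)` is controllable, then so is the augmented pair
`(Ā, B̄)` with `Ā = [[A₀, B],[0,0]]` and `B̄ = [[0],[I]]`. -/
theorem augmented_pair_controllable {n m : ℕ}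
    (A₀ : Matrix (Fin n) (Fin n) ℝ) (B : Matrix (Fin n) (Fin m) ℝ)
    (h : Controllable A₀ B) :
    Controllable
      (Matrix.fromBlocks A₀ B (0 : Matrix (Fin m) (Fin n) ℝ) (0 : Matrix (Fin m) (Fin m) ℝ))
      (Matrix.fromRows (0 : Matrix (Fin n) (Fin m) ℝ) (1 : Matrix (Fin m) (Fin m) ℝ)) := by
  rcases Nat.eq_zero_or_pos m with hm | hm
  · subst hm
    have hn : n = 0 := by
      have := (Matrix.of fun (i : Fin n) (p : Fin (Fintype.card (Fin n)) × Fin 0) =>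
        (A₀ ^ (p.1 : ℕ) * B) i p.2).rank_le_card_width
      rw [h] at this
      simpa using this
    subst hn
    unfold Controllable
    simp [Matrix.rank]
    rw [Submodule.eq_bot_iff]
    intro v _
    funext i
    exact isEmptyElim i
  · -- main case: m ≥ 1
    set Ab := Matrix.fromBlocks A₀ B (0 : Matrix (Fin m) (Fin n) ℝ) (0 : Matrix (Fin m) (Fin m) ℝ)
      with hAb
    set Bb := Matrix.fromRows (0 : Matrix (Fin n) (Fin m) ℝ) (1 : Matrix (Fin m) (Fin m) ℝ)
      with hBb
    rw [Controllable]
    rw [aux_rank_iff]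
    -- surjectivity of original controllability matrix
    rw [Controllable, aux_rank_iff] at h
    intro v
    obtain ⟨y, hy⟩ := h fun i => v (Sum.inl i)
    have hn : Fintype.card (Fin n) = n := Fintype.card_fin n
    have hcard : Fintype.card (Fin n ⊕ Fin m) = n + m := by simp
    -- build the preimage vector
    refine ⟨fun pj => if hp : (pj.1 : ℕ) = 0 then v (Sum.inr pj.2)
      else if hq : (pj.1 : ℕ) - 1 < Fintype.card (Fin n)
        then y (⟨(pj.1 : ℕ) - 1, hq⟩, pj.2) else 0, ?_⟩
    rw [Matrix.mulVecLin_apply]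
    funext i
    rw [Matrix.mulVec, dotProduct]
    haveI : NeZero (Fintype.card (Fin n ⊕ Fin m)) := ⟨by omega⟩
    have hlt : ∀ q : Fin (Fintype.card (Fin n)), (q : ℕ) + 1 < Fintype.card (Fin n ⊕ Fin m) := by
      intro q
      have := q.isLt
      omega
    set ι : Fin (Fintype.card (Fin n)) × Fin m → Fin (Fintype.card (Fin n ⊕ Fin m)) × Fin m :=
      fun qj => (⟨(qj.1 : ℕ) + 1, hlt qj.1⟩, qj.2) with hι
    cases i with
    | inl i₀ =>
      rw [← Finset.sum_subset (Finset.subset_univ (Finset.univ.image ι))]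
      · rw [Finset.sum_image (fun a _ b _ hab => by
          simpa [hι, Prod.ext_iff, Fin.ext_iff] using hab)]
        rw [← congrFun hy i₀, Matrix.mulVecLin_apply, Matrix.mulVec, dotProduct]
        apply Finset.sum_congr rfl
        intro qj _
        obtain ⟨q, j⟩ := qj
        simp only [hι, Matrix.of_apply, hAb, hBb]
        rw [aux_pow_mul]
        rw [dif_neg (Nat.succ_ne_zero _)]
        rw [dif_pos]
        · simp [Fin.eta]
        · exact q.isLt
      · intro pj _ hpj
        obtain ⟨p, j⟩ := pj
        dsimp only
        rcases Nat.eq_zero_or_pos (p : ℕ) with h0 | h0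
        · simp only [Matrix.of_apply, h0, pow_zero, hBb, Matrix.one_mul,
            Matrix.fromRows_apply_inl, Matrix.zero_apply, zero_mul]
        · obtain ⟨q, hq⟩ : ∃ q, (p : ℕ) = q + 1 := ⟨(p : ℕ) - 1, by omega⟩
          rcases lt_or_ge q (Fintype.card (Fin n)) with hlt' | hge
          · exact absurd (Finset.mem_image.mpr ⟨(⟨q, hlt'⟩, j), Finset.mem_univ _,
              by simp [hι, Prod.ext_iff, Fin.ext_iff, hq]⟩) hpj
          · rw [dif_neg (by omega), dif_neg (by omega), mul_zero]
    | inr i₀ =>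
      rw [Fintype.sum_prod_type]
      rw [Finset.sum_eq_single (0 : Fin (Fintype.card (Fin n ⊕ Fin m)))]
      · simp only [Matrix.of_apply, Fin.val_zero, pow_zero, one_mul, hBb,
          Matrix.fromRows_apply_inr, dif_pos rfl]
        simp [Matrix.one_apply, Matrix.one_mul]
      · intro p _ hp
        have h0 : (p : ℕ) ≠ 0 := fun hc => hp (Fin.ext (by simp [hc]))
        obtain ⟨q, hq⟩ : ∃ q, (p : ℕ) = q + 1 := ⟨(p : ℕ) - 1, by omega⟩
        apply Finset.sum_eq_zero
        intro j _
        simp only [Matrix.of_apply, hAb, hBb, hq]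
        rw [aux_pow_mul]
        simp
      · simp
end

section
/- Let Ā ∈ ℝ^{N×N}, B̄ ∈ ℝ^{N×M} with (Ā, B̄) controllable, let Q̄ ∈ ℝ^{N×N} be symmetric positive semidefinite, let P be a real symmetric positive semidefinite solution of the algebraic Riccati equation ĀᵀP + PĀ − PB̄B̄ᵀP + Q̄ = 0, and set Ã = Ā − B̄B̄ᵀP. If h ∈ ℝ^N satisfies Ãh = 0, then Ph = 0. -/
open Matrix

/-! Evaluated at `h`, the Riccati equation collapses under `Ah = BBᵀPh` to
`AᵀPh + Qh = 0`; pairing with `h` turns `hᵀAᵀPh` into `|BᵀPh|²`, so `|BᵀPh|² + hᵀQh = 0`.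
Hence `BᵀPh = 0`, `Qh = 0` and `AᵀPh = 0`: the vector `Ph` is a left eigenvector of `A`
annihilated by `Bᵀ`, which the Hautus test rules out for a controllable pair unless `Ph = 0`. -/

namespace Matrix

variable {m n K : Type*} [Fintype m] [Fintype n] [Field K]

theorem vecMul_injective_of_rank_eq_card {A : Matrix m n K} (hA : A.rank = Fintype.card m) :
    Function.Injective A.vecMul := by
  rw [vecMul_injective_iff, linearIndependent_iff_card_eq_finrank_span, ← hA,
    rank_eq_finrank_span_row]
  rfl

theorem vecMul_pow_of_vecMul_eq_smul [DecidableEq n] {A : Matrix n n K} {u : n → K} {μ : K}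
    (hu : u ᵥ* A = μ • u) (k : ℕ) : u ᵥ* A ^ k = μ ^ k • u := by
  induction k with
  | zero => simp
  | succ k ih => rw [pow_succ, ← vecMul_vecMul, ih, smul_vecMul, hu, smul_smul, pow_succ]

end Matrix

/-- One direction of the Hautus test: for a controllable pair `(M, N)`, no left eigenvector
of `M` is annihilated by `N`. -/
theorem Controllable.eq_zero_of_vecMul_eq_smul {K L : Type*} [Fintype K] [Fintype L]
    [DecidableEq K] {M : Matrix K K ℝ} {N : Matrix K L ℝ} (hc : Controllable M N)
    {u : K → ℝ} {μ : ℝ} (hM : u ᵥ* M = μ • u) (hN : u ᵥ* N = 0) : u = 0 := by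
  refine vecMul_injective_of_rank_eq_card hc ?_
  ext ⟨k, l⟩
  have hk : (u ᵥ* (M ^ (k : ℕ) * N)) l = 0 := by
    rw [← vecMul_vecMul, vecMul_pow_of_vecMul_eq_smul hM, smul_vecMul, hN, smul_zero,
      Pi.zero_apply]
  simpa [vecMul, dotProduct] using hk

section Riccati

variable {n m R : Type*} [Fintype n] [Fintype m] [CommRing R]

def riccati (A : Matrix n n R) (B : Matrix n m R) (Q P : Matrix n n R) : Matrix n n R :=
  Aᵀ * P + P * A - P * B * Bᵀ * P + Q

variable {A : Matrix n n R} {B : Matrix n m R} {Q P : Matrix n n R} {h : n → R}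

theorem mulVec_eq_of_closedLoop (hker : (A - B * Bᵀ * P) *ᵥ h = 0) :
    A *ᵥ h = B *ᵥ (Bᵀ *ᵥ (P *ᵥ h)) := by
  rw [sub_mulVec, sub_eq_zero] at hker
  simpa only [← mulVec_mulVec] using hker

theorem riccati_mulVec_of_closedLoop (hker : (A - B * Bᵀ * P) *ᵥ h = 0) :
    riccati A B Q P *ᵥ h = Aᵀ *ᵥ (P *ᵥ h) + Q *ᵥ h := by
  simp only [riccati, add_mulVec, sub_mulVec, ← mulVec_mulVec, mulVec_eq_of_closedLoop hker]
  abel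

theorem dotProduct_riccati_mulVec_of_closedLoop (hker : (A - B * Bᵀ * P) *ᵥ h = 0) :
    h ⬝ᵥ (riccati A B Q P *ᵥ h) =
      (Bᵀ *ᵥ (P *ᵥ h)) ⬝ᵥ (Bᵀ *ᵥ (P *ᵥ h)) + h ⬝ᵥ (Q *ᵥ h) := by
  rw [riccati_mulVec_of_closedLoop hker, dotProduct_add, dotProduct_mulVec, vecMul_transpose,
    dotProduct_comm, mulVec_eq_of_closedLoop hker, dotProduct_mulVec, ← mulVec_transpose]

end Riccati

theorem transpose_mulVec_mulVec_eq_zero_of_riccati_eq_zero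
    {n m : Type*} [Fintype n] [Fintype m] {A : Matrix n n ℝ} {B : Matrix n m ℝ}
    {Q P : Matrix n n ℝ} (hQ : Q.PosSemidef) (hare : riccati A B Q P = 0) {h : n → ℝ}
    (hker : (A - B * Bᵀ * P) *ᵥ h = 0) :
    Aᵀ *ᵥ (P *ᵥ h) = 0 ∧ Bᵀ *ᵥ (P *ᵥ h) = 0 := by
  have hsum := dotProduct_riccati_mulVec_of_closedLoop (Q := Q) hker
  rw [hare, zero_mulVec, dotProduct_zero] at hsum
  have hv : 0 ≤ (Bᵀ *ᵥ (P *ᵥ h)) ⬝ᵥ (Bᵀ *ᵥ (P *ᵥ h)) := by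
    simpa using dotProduct_self_star_nonneg (Bᵀ *ᵥ (P *ᵥ h))
  have hq : 0 ≤ h ⬝ᵥ (Q *ᵥ h) := by simpa using hQ.dotProduct_mulVec_nonneg h
  have hQh : Q *ᵥ h = 0 :=
    (hQ.dotProduct_mulVec_zero_iff h).mp (by simpa using (by linarith : h ⬝ᵥ (Q *ᵥ h) = 0))
  have hAP := riccati_mulVec_of_closedLoop (Q := Q) hker
  rw [hare, zero_mulVec, hQh, add_zero] at hAP
  exact ⟨hAP.symm, dotProduct_self_eq_zero.mp (by linarith)⟩

theorem riccati_kernel_of_closedLoop_general {N M : ℕ}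
    (Abar : Matrix (Fin N) (Fin N) ℝ) (Bbar : Matrix (Fin N) (Fin M) ℝ)
    (Qbar : Matrix (Fin N) (Fin N) ℝ) (hQ : Qbar.PosSemidef)
    (hc : Controllable Abar Bbar)
    (P : Matrix (Fin N) (Fin N) ℝ)
    (hare : Abarᵀ * P + P * Abar - P * Bbar * Bbarᵀ * P + Qbar = 0)
    (h : Fin N → ℝ) (hker : (Abar - Bbar * Bbarᵀ * P) *ᵥ h = 0) :
    P *ᵥ h = 0 := by
  obtain ⟨hA, hB⟩ := transpose_mulVec_mulVec_eq_zero_of_riccati_eq_zero hQ hare hker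
  rw [mulVec_transpose] at hA hB
  exact hc.eq_zero_of_vecMul_eq_smul (μ := 0) (by rw [hA, zero_smul]) hB

/-- If `(Ā, B̄)` is controllable, `Q̄` is symmetric PSD, `P` is a symmetric PSD solution of the
algebraic Riccati equation, and `Ã = Ā − B̄B̄ᵀP`, then every `h` with `Ãh = 0` satisfies
`Ph = 0`. -/
theorem riccati_kernel_of_closedLoop {N M : ℕ}
    (Abar : Matrix (Fin N) (Fin N) ℝ) (Bbar : Matrix (Fin N) (Fin M) ℝ)
    (Qbar : Matrix (Fin N) (Fin N) ℝ) (hQ : Qbar.PosSemidef)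
    (hc : Controllable Abar Bbar)
    (P : Matrix (Fin N) (Fin N) ℝ) (hP : P.PosSemidef)
    (hare : Abarᵀ * P + P * Abar - P * Bbar * Bbarᵀ * P + Qbar = 0)
    (h : Fin N → ℝ) (hker : (Abar - Bbar * Bbarᵀ * P) *ᵥ h = 0) :
    P *ᵥ h = 0 :=
  riccati_kernel_of_closedLoop_general Abar Bbar Qbar hQ hc P hare h hker
end

section
/- Assume Assumptions A1, A2 and A3 hold, and let P be a real symmetric positive semidefinite solution of the ARE with Ã = Ā − B̄B̄ᵀP. Then every complex eigenvalue λ of Ã with Re(λ) ≥ 0 satisfies λ = 0; in other words, every nonzero eigenvalue of Ã has negative real part. -/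
open Matrix Filter Topology

/-- `Q(α) = D + A¹(α) − A²(α)` where `A¹(α)` keeps adjacency entries with `α i = -α j`
and `A²(α)` keeps adjacency entries with `α i = α j`. -/
noncomputable def Qmat {n : ℕ} (G : SimpleGraph (Fin n)) [DecidableRel G.Adj] (α : Fin n → ℝ) :
    Matrix (Fin n) (Fin n) ℝ :=
  G.degMatrix ℝ
    + Matrix.of (fun i j => if α i = -α j then G.adjMatrix ℝ i j else 0)
    - Matrix.of (fun i j => if α i = α j then G.adjMatrix ℝ i j else 0)

/-- `(M, C)` is observable iff `(Mᵀ, Cᵀ)` is controllable. -/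
def Observable {K L : Type*} [Fintype K] [Fintype L] [DecidableEq K] [DecidableEq L]
    (M : Matrix K K ℝ) (C : Matrix L K ℝ) : Prop :=
  Controllable Mᵀ Cᵀ

/-!
Test the Riccati equation, rewritten as a Lyapunov equation for `Ã`, against an eigenvector `h`
with `Ã h = λ h`: this gives `2 Re λ · h*Ph + h*Q̄h + ‖B̄ᵀPh‖² = 0`, a sum of three nonnegative
terms when `Re λ ≥ 0`. Hence `Q̄h = 0` and `B̄ᵀPh = 0`, so `h` is an eigenvector of `Ā` as well.
Because `λ ≠ 0`, the `ℝᵐ`-block of `h` vanishes and its `ℝⁿ`-block is an eigenvector of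
`−L + aI` in the kernel of `Q(α)`, which observability rules out. That `Q(α)` is positive
semidefinite comes from `Q(α) = diag(α) L diag(α)`.
-/

open scoped ComplexOrder

namespace Matrix

variable {R K L N 𝕜 : Type*}

section Riccati

variable [Fintype K] [Fintype L] [RCLike 𝕜] {A P Q : Matrix K K 𝕜} {B : Matrix K L 𝕜}

theorem riccati_closedLoop_lyapunov (hP : P.IsHermitian)
    (hare : Aᴴ * P + P * A - P * B * Bᴴ * P + Q = 0) :
    (A - B * Bᴴ * P)ᴴ * P + P * (A - B * Bᴴ * P) + Q + (Bᴴ * P)ᴴ * (Bᴴ * P) = 0 := by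
  have hgain : (Bᴴ * P)ᴴ * (Bᴴ * P) = P * (B * Bᴴ) * P := by
    simp only [conjTranspose_mul, conjTranspose_conjTranspose, hP.eq, Matrix.mul_assoc]
  have hclosed : (A - B * Bᴴ * P)ᴴ = Aᴴ - P * (B * Bᴴ) := by
    simp only [conjTranspose_sub, conjTranspose_mul, conjTranspose_conjTranspose, hP.eq,
      Matrix.mul_assoc]
  rw [Matrix.mul_assoc P B] at hare
  rw [hgain, hclosed, ← hare]
  generalize B * Bᴴ = S
  noncomm_ring

theorem riccati_closedLoop_eigenvector (hP : P.PosSemidef) (hQ : Q.PosSemidef)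
    (hare : Aᴴ * P + P * A - P * B * Bᴴ * P + Q = 0) {lam : 𝕜} {x : K → 𝕜}
    (hx : (A - B * Bᴴ * P) *ᵥ x = lam • x) (hlam : 0 ≤ RCLike.re lam) :
    Q *ᵥ x = 0 ∧ A *ᵥ x = lam • x := by
  have hform := congrArg (fun X => star x ⬝ᵥ (X *ᵥ x)) (riccati_closedLoop_lyapunov hP.1 hare)
  simp only [add_mulVec, ← mulVec_mulVec, dotProduct_add, zero_mulVec, dotProduct_zero,
    dotProduct_mulVec _ (A - B * Bᴴ * P)ᴴ, dotProduct_mulVec _ (Bᴴ * P)ᴴ, vecMul_conjTranspose,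
    hx, star_smul, smul_dotProduct, mulVec_smul, dotProduct_smul, star_star, smul_eq_mul,
    ← add_mul, RCLike.star_def] at hform
  rw [add_comm (starRingEnd 𝕜 lam), RCLike.add_conj] at hform
  have hP_term : 0 ≤ 2 * (RCLike.re lam : 𝕜) * (star x ⬝ᵥ P *ᵥ x) :=
    mul_nonneg (mul_nonneg zero_le_two (RCLike.ofReal_nonneg.2 hlam))
      (hP.dotProduct_mulVec_nonneg x)
  have hQ_term := hQ.dotProduct_mulVec_nonneg x
  obtain ⟨hPQ_zero, hgain_zero⟩ := (add_eq_zero_iff_of_nonneg (add_nonneg hP_term hQ_term)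
    (dotProduct_star_self_nonneg _)).1 hform
  refine ⟨(hQ.dotProduct_mulVec_zero_iff x).1
    ((add_eq_zero_iff_of_nonneg hP_term hQ_term).1 hPQ_zero).2, ?_⟩
  rw [dotProduct_star_self_eq_zero] at hgain_zero
  simpa only [sub_mulVec, ← mulVec_mulVec, hgain_zero, mulVec_zero, sub_zero] using hx

end Riccati

theorem eigenvector_fromBlocks_zero_zero [Semiring R] [NoZeroDivisors R] [Fintype K]
    [Fintype L] {M : Matrix K K R} {N : Matrix K L R} {lam : R} (hlam : lam ≠ 0)
    {x : K ⊕ L → R} (hx : fromBlocks M N 0 0 *ᵥ x = lam • x) :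
    x ∘ Sum.inr = 0 ∧ M *ᵥ (x ∘ Sum.inl) = lam • (x ∘ Sum.inl) := by
  rw [fromBlocks_mulVec] at hx
  have hinr : x ∘ Sum.inr = 0 := funext fun j => by
    have := congrFun hx (Sum.inr j)
    simp only [Sum.elim_inr, zero_mulVec, add_zero, Pi.zero_apply, Pi.smul_apply,
      smul_eq_mul] at this
    exact (mul_eq_zero.1 this.symm).resolve_left hlam
  refine ⟨hinr, funext fun i => ?_⟩
  simpa only [Sum.elim_inl, hinr, mulVec_zero, add_zero, Pi.smul_apply, Function.comp_apply]
    using congrFun hx (Sum.inl i)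

theorem PosSemidef.fromBlocks_zero [CommRing R] [PartialOrder R] [StarRing R] [Fintype K]
    [Fintype L] {M : Matrix K K R} (hM : M.PosSemidef) :
    (fromBlocks M 0 0 (0 : Matrix L L R)).PosSemidef := by
  refine PosSemidef.of_dotProduct_mulVec_nonneg ?_ fun x => ?_
  · simp [IsHermitian, fromBlocks_conjTranspose, hM.1.eq]
  · simpa [fromBlocks_mulVec, dotProduct, Fintype.sum_sum_type, mulVec] using
      hM.dotProduct_mulVec_nonneg (x ∘ Sum.inl)

section Complexification

theorem map_ofReal_zero : (0 : Matrix K L ℝ).map Complex.ofReal = 0 :=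
  Matrix.map_zero _ Complex.ofReal_zero

theorem map_ofReal_add (X Y : Matrix K L ℝ) :
    (X + Y).map Complex.ofReal = X.map Complex.ofReal + Y.map Complex.ofReal :=
  Matrix.map_add _ Complex.ofReal_add X Y

theorem map_ofReal_sub (X Y : Matrix K L ℝ) :
    (X - Y).map Complex.ofReal = X.map Complex.ofReal - Y.map Complex.ofReal :=
  Matrix.map_sub _ Complex.ofReal_sub X Y

theorem map_ofReal_mul [Fintype L] (X : Matrix K L ℝ) (Y : Matrix L N ℝ) :
    (X * Y).map Complex.ofReal = X.map Complex.ofReal * Y.map Complex.ofReal :=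
  Matrix.map_mul (f := Complex.ofRealHom)

theorem map_ofReal_pow [Fintype K] [DecidableEq K] (X : Matrix K K ℝ) (k : ℕ) :
    (X ^ k).map Complex.ofReal = X.map Complex.ofReal ^ k :=
  Matrix.map_pow X Complex.ofRealHom k

theorem transpose_map_ofReal (X : Matrix K L ℝ) :
    Xᵀ.map Complex.ofReal = (X.map Complex.ofReal)ᴴ := by
  rw [← conjTranspose_eq_transpose_of_trivial,
    conjTranspose_map _ fun _ => (Complex.conj_ofReal _).symm]

theorem PosSemidef.map_ofReal [Fintype K] {M : Matrix K K ℝ} (hM : M.PosSemidef) :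
    (M.map Complex.ofReal).PosSemidef := by
  obtain ⟨r, v, rfl⟩ := posSemidef_iff_eq_sum_vecMulVec.1 hM
  have hmap : (∑ i, vecMulVec (v i) (star (v i))).map Complex.ofReal
      = ∑ i, vecMulVec (fun a => (v i a : ℂ)) (star fun a => (v i a : ℂ)) := by
    ext a b
    simp [vecMulVec_apply, sum_apply]
  rw [hmap]
  exact posSemidef_sum _ fun i _ => posSemidef_vecMulVec_self_star _

theorem map_ofReal_mulVec_eq_zero_iff [Fintype L] {X : Matrix K L ℝ} {x : L → ℂ} :
    X.map Complex.ofReal *ᵥ x = 0 ↔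
      X *ᵥ (fun i => (x i).re) = 0 ∧ X *ᵥ (fun i => (x i).im) = 0 := by
  simp only [funext_iff, Complex.ext_iff, mulVec, dotProduct, map_apply, Pi.zero_apply,
    Complex.re_sum, Complex.im_sum, Complex.re_ofReal_mul, Complex.im_ofReal_mul,
    Complex.zero_re, Complex.zero_im]
  exact forall_and

end Complexification

end Matrix

section Observability

variable {K L : Type*} [Fintype K] [Fintype L] [DecidableEq K]

theorem Controllable.eq_zero_of_vecMul_pow_mul_eq_zero {M : Matrix K K ℝ} {N : Matrix K L ℝ}
    (hMN : Controllable M N) {y : K → ℝ} (hy : ∀ k : ℕ, y ᵥ* (M ^ k * N) = 0) : y = 0 := by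
  set W := Matrix.of fun (i : K) (p : Fin (Fintype.card K) × L) => (M ^ (p.1 : ℕ) * N) i p.2
  have hker : LinearMap.ker Wᵀ.mulVecLin = ⊥ := by
    have hdim := LinearMap.finrank_range_add_finrank_ker Wᵀ.mulVecLin
    rw [← Matrix.rank, Matrix.rank_transpose, hMN, Module.finrank_fintype_fun_eq_card] at hdim
    exact Submodule.finrank_eq_zero.1 (by omega)
  refine Matrix.ker_mulVecLin_eq_bot_iff.1 hker y (funext fun p => ?_)
  simpa [Matrix.mulVec_transpose, Matrix.vecMul, W] using congrFun (hy p.1) p.2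

variable [DecidableEq L] {M : Matrix K K ℝ} {C : Matrix L K ℝ}

theorem Observable.eq_zero_of_mul_pow_mulVec_eq_zero (hMC : Observable M C) {y : K → ℝ}
    (hy : ∀ k : ℕ, (C * M ^ k) *ᵥ y = 0) : y = 0 :=
  Controllable.eq_zero_of_vecMul_pow_mul_eq_zero hMC fun k => by
    rw [← Matrix.transpose_pow, ← Matrix.transpose_mul, Matrix.vecMul_transpose, hy]

/- The real and imaginary parts of `x` are real vectors annihilated by every `C Mᵏ`. -/
theorem Observable.eq_zero_of_eigenvector_of_mulVec_eq_zero (hMC : Observable M C) {lam : ℂ}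
    {x : K → ℂ} (hCx : C.map Complex.ofReal *ᵥ x = 0)
    (hMx : M.map Complex.ofReal *ᵥ x = lam • x) : x = 0 := by
  have hMkx (k : ℕ) : M.map Complex.ofReal ^ k *ᵥ x = lam ^ k • x := by
    induction k with
    | zero => simp
    | succ k ih => rw [pow_succ', ← mulVec_mulVec, ih, mulVec_smul, hMx, smul_smul, pow_succ]
  have hCMkx (k : ℕ) : (C * M ^ k).map Complex.ofReal *ᵥ x = 0 := by
    rw [Matrix.map_ofReal_mul, Matrix.map_ofReal_pow, ← mulVec_mulVec, hMkx, mulVec_smul, hCx,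
      smul_zero]
  have hre := hMC.eq_zero_of_mul_pow_mulVec_eq_zero fun k =>
    (Matrix.map_ofReal_mulVec_eq_zero_iff.1 (hCMkx k)).1
  have him := hMC.eq_zero_of_mul_pow_mulVec_eq_zero fun k =>
    (Matrix.map_ofReal_mulVec_eq_zero_iff.1 (hCMkx k)).2
  exact funext fun i => Complex.ext (congrFun hre i) (congrFun him i)

end Observability

section SignedLaplacian

variable {n : ℕ} (G : SimpleGraph (Fin n)) [DecidableRel G.Adj] {α : Fin n → ℝ}

theorem Qmat_eq_diagonal_mul_lapMatrix_mul_diagonal (hα : ∀ i, α i = 1 ∨ α i = -1) :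
    Qmat G α = diagonal α * G.lapMatrix ℝ * diagonal α := by
  ext i j
  by_cases hij : i = j
  · subst hij
    rcases hα i with hi | hi <;> simp [Qmat, SimpleGraph.lapMatrix, hi]
  · rcases hα i with hi | hi <;> rcases hα j with hj | hj <;> by_cases hadj : G.Adj i j <;>
      simp [Qmat, SimpleGraph.lapMatrix, SimpleGraph.degMatrix, hi, hj, hij, hadj] <;> norm_num

theorem Qmat_posSemidef (hα : ∀ i, α i = 1 ∨ α i = -1) : (Qmat G α).PosSemidef := by
  rw [Qmat_eq_diagonal_mul_lapMatrix_mul_diagonal G hα]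
  simpa using (SimpleGraph.posSemidef_lapMatrix ℝ G).mul_mul_conjTranspose_same (diagonal α)

end SignedLaplacian

theorem closedLoop_nonzero_eigenvalues_neg_re_general {n m : ℕ}
    (G : SimpleGraph (Fin n)) [DecidableRel G.Adj]
    (α : Fin n → ℝ) (hα : ∀ i, α i = 1 ∨ α i = -1)
    (a : ℝ)
    (B : Matrix (Fin n) (Fin m) ℝ)
    -- Assumption A3
    (hA3o : Observable (-(G.lapMatrix ℝ) + a • (1 : Matrix (Fin n) (Fin n) ℝ)) (Qmat G α))
    -- the augmented matrices
    (Abar : Matrix (Fin n ⊕ Fin m) (Fin n ⊕ Fin m) ℝ)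
    (hAbar : Abar = Matrix.fromBlocks
      (-(G.lapMatrix ℝ) + a • (1 : Matrix (Fin n) (Fin n) ℝ)) B 0 0)
    (Bbar : Matrix (Fin n ⊕ Fin m) (Fin m) ℝ)
    (Qbar : Matrix (Fin n ⊕ Fin m) (Fin n ⊕ Fin m) ℝ)
    (hQbar : Qbar = Matrix.fromBlocks (Qmat G α) 0 0 0)
    -- `P` is a symmetric PSD solution of the ARE, `Ã` the closed-loop matrix
    (P : Matrix (Fin n ⊕ Fin m) (Fin n ⊕ Fin m) ℝ) (hP : P.PosSemidef)
    (hare : Abarᵀ * P + P * Abar - P * Bbar * Bbarᵀ * P + Qbar = 0)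
    (Atil : Matrix (Fin n ⊕ Fin m) (Fin n ⊕ Fin m) ℝ)
    (hAtil : Atil = Abar - Bbar * Bbarᵀ * P) :
    ∀ lam : ℂ, 0 ≤ lam.re →
      (∃ h : Fin n ⊕ Fin m → ℂ, h ≠ 0 ∧ Atil.map (Complex.ofReal) *ᵥ h = lam • h) →
      lam = 0 := by
  rintro lam hre ⟨h, hh0, hev⟩
  by_contra hlam
  have hareC := congrArg (Matrix.map · Complex.ofReal) hare
  simp only [map_ofReal_add, map_ofReal_sub, map_ofReal_mul, transpose_map_ofReal,
    map_ofReal_zero] at hareC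
  rw [hAtil, map_ofReal_sub, map_ofReal_mul, map_ofReal_mul, transpose_map_ofReal] at hev
  have hQbar_psd : Qbar.PosSemidef := hQbar ▸ (Qmat_posSemidef G hα).fromBlocks_zero
  obtain ⟨hQh, hAh⟩ := riccati_closedLoop_eigenvector hP.map_ofReal hQbar_psd.map_ofReal hareC
    hev hre
  rw [hAbar, fromBlocks_map, map_ofReal_zero, map_ofReal_zero] at hAh
  obtain ⟨hu, hx⟩ := eigenvector_fromBlocks_zero_zero hlam hAh
  have hQx : (Qmat G α).map Complex.ofReal *ᵥ (h ∘ Sum.inl) = 0 := by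
    rw [hQbar, fromBlocks_map, map_ofReal_zero, map_ofReal_zero, map_ofReal_zero,
      fromBlocks_mulVec] at hQh
    simpa using congrArg (· ∘ Sum.inl) hQh
  have hx0 := hA3o.eq_zero_of_eigenvector_of_mulVec_eq_zero hQx hx
  exact hh0 (funext (Sum.rec (congrFun hx0) (congrFun hu)))

/-- Under Assumptions A1 (connectedness), A2 (an equilibrium in the pattern set) and A3
(controllability/observability), for any symmetric PSD solution `P` of the ARE and
`Ã = Ā − B̄B̄ᵀP`, every complex eigenvalue `λ` of `Ã` with `Re λ ≥ 0` equals `0`. -/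
theorem closedLoop_nonzero_eigenvalues_neg_re {n m : ℕ} (hn : 0 < n)
    (G : SimpleGraph (Fin n)) [DecidableRel G.Adj]
    (α : Fin n → ℝ) (hα : ∀ i, α i = 1 ∨ α i = -1)
    (p₀ : ℝ) (hp₀ : 0 < p₀) (a : ℝ)
    (ι : Fin m → Fin n) (hι : StrictMono ι)
    -- the control matrix `B = [e_{i₁}, …, e_{i_m}]`
    (B : Matrix (Fin n) (Fin m) ℝ) (hB : B = Matrix.of fun i j => if i = ι j then 1 else 0)
    -- Assumption A1
    (hA1 : G.Connected)
    -- Assumption A2 : `∃ x* ∈ S(α)` and `u*` with `(−L + aI)x* + Bu* = 0`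
    (hA2 : ∃ (xs : Fin n → ℝ) (us : Fin m → ℝ),
      (Qmat G α *ᵥ xs = 0 ∧ p₀ * Real.sqrt n ≤ Real.sqrt (∑ i, xs i ^ 2)) ∧
      (-(G.lapMatrix ℝ) + a • (1 : Matrix (Fin n) (Fin n) ℝ)) *ᵥ xs + B *ᵥ us = 0)
    -- Assumption A3
    (hA3c : Controllable (-(G.lapMatrix ℝ) + a • (1 : Matrix (Fin n) (Fin n) ℝ)) B)
    (hA3o : Observable (-(G.lapMatrix ℝ) + a • (1 : Matrix (Fin n) (Fin n) ℝ)) (Qmat G α))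
    -- the augmented matrices
    (Abar : Matrix (Fin n ⊕ Fin m) (Fin n ⊕ Fin m) ℝ)
    (hAbar : Abar = Matrix.fromBlocks
      (-(G.lapMatrix ℝ) + a • (1 : Matrix (Fin n) (Fin n) ℝ)) B 0 0)
    (Bbar : Matrix (Fin n ⊕ Fin m) (Fin m) ℝ)
    (hBbar : Bbar = Matrix.fromRows (0 : Matrix (Fin n) (Fin m) ℝ) (1 : Matrix (Fin m) (Fin m) ℝ))
    (Qbar : Matrix (Fin n ⊕ Fin m) (Fin n ⊕ Fin m) ℝ)
    (hQbar : Qbar = Matrix.fromBlocks (Qmat G α) 0 0 0)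
    -- `P` is a symmetric PSD solution of the ARE, `Ã` the closed-loop matrix
    (P : Matrix (Fin n ⊕ Fin m) (Fin n ⊕ Fin m) ℝ) (hP : P.PosSemidef)
    (hare : Abarᵀ * P + P * Abar - P * Bbar * Bbarᵀ * P + Qbar = 0)
    (Atil : Matrix (Fin n ⊕ Fin m) (Fin n ⊕ Fin m) ℝ)
    (hAtil : Atil = Abar - Bbar * Bbarᵀ * P) :
    ∀ lam : ℂ, 0 ≤ lam.re →
      (∃ h : Fin n ⊕ Fin m → ℂ, h ≠ 0 ∧ Atil.map (Complex.ofReal) *ᵥ h = lam • h) →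
      lam = 0 :=
  closedLoop_nonzero_eigenvalues_neg_re_general G α hα a B hA3o Abar hAbar Bbar Qbar hQbar P hP hare
    Atil hAtil
end

section
/- Let A₀ ∈ ℝ^{n×n} and B ∈ ℝ^{n×m}. If the pair (A₀, Bᵀ) is observable, then the augmented pair (Ā, C) is observable, where Ā = [[A₀, B],[0_{m×n}, 0_{m×m}]] ∈ ℝ^{(n+m)×(n+m)} and C = [[Bᵀ, 0_{m×m}],[0_{m×n}, I_m]] ∈ ℝ^{2m×(n+m)}. -/
open Matrix

lemma rank_eq_card_iff_vecMul {K J : Type*} [Fintype K] [Fintype J]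
    (M : Matrix K J ℝ) :
    M.rank = Fintype.card K ↔ ∀ v : K → ℝ, v ᵥ* M = 0 → v = 0 := by
  rw [← Matrix.rank_transpose, Matrix.rank, Matrix.mulVecLin_transpose]
  have hk := M.vecMulLinear.finrank_range_add_finrank_ker
  rw [Module.finrank_fintype_fun_eq_card] at hk
  constructor
  · intro hr v hv
    have hker : LinearMap.ker M.vecMulLinear = ⊥ := by
      apply Submodule.finrank_eq_zero.mp
      omega
    exact (LinearMap.ker_eq_bot'.mp hker) v hv
  · intro hv
    have hker : LinearMap.ker M.vecMulLinear = ⊥ :=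
      LinearMap.ker_eq_bot'.mpr fun v hvv => hv v hvv
    rw [hker, finrank_bot] at hk
    omega

lemma pow_blocks {n m : ℕ} (A : Matrix (Fin n) (Fin n) ℝ) (B : Matrix (Fin m) (Fin n) ℝ)
    (p : ℕ) :
    ∃ (X : Matrix (Fin m) (Fin n) ℝ) (Y : Matrix (Fin m) (Fin m) ℝ),
      (fromBlocks A (0 : Matrix (Fin n) (Fin m) ℝ) B (0 : Matrix (Fin m) (Fin m) ℝ)) ^ p
        = fromBlocks (A ^ p) (0 : Matrix (Fin n) (Fin m) ℝ) X Y := by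
  induction p with
  | zero => exact ⟨0, 1, by rw [pow_zero, pow_zero, fromBlocks_one]⟩
  | succ p ih =>
    obtain ⟨X, Y, hXY⟩ := ih
    refine ⟨X * A + Y * B, 0, ?_⟩
    rw [pow_succ, pow_succ, hXY, fromBlocks_multiply]
    simp

/-- If `(A₀, Bᵀ)` is observable then the augmented pair `(Ā, C)` is observable, where
`Ā = [[A₀, B],[0,0]]` and `C = [[Bᵀ, 0],[0, I_m]]`. -/
theorem augmented_pair_observable {n m : ℕ}
    (A₀ : Matrix (Fin n) (Fin n) ℝ) (B : Matrix (Fin n) (Fin m) ℝ)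
    (h : Observable A₀ Bᵀ) :
    Observable
      (Matrix.fromBlocks A₀ B (0 : Matrix (Fin m) (Fin n) ℝ) (0 : Matrix (Fin m) (Fin m) ℝ))
      (Matrix.fromBlocks Bᵀ (0 : Matrix (Fin m) (Fin m) ℝ)
        (0 : Matrix (Fin m) (Fin n) ℝ) (1 : Matrix (Fin m) (Fin m) ℝ)) := by
  rw [Observable, Controllable, rank_eq_card_iff_vecMul] at h ⊢
  intro x hx
  by_cases h0 : n + m = 0
  · funext i
    cases i with
    | inl i => exact absurd i.isLt (by omega)
    | inr j => exact absurd j.isLt (by omega)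
  have hx' : ∀ p : ℕ, p < n + m →
      x ᵥ* ((fromBlocks A₀ᵀ (0 : Matrix (Fin n) (Fin m) ℝ) Bᵀ (0 : Matrix (Fin m) (Fin m) ℝ)) ^ p
        * fromBlocks B (0 : Matrix (Fin n) (Fin m) ℝ) (0 : Matrix (Fin m) (Fin m) ℝ)
          (1 : Matrix (Fin m) (Fin m) ℝ)) = 0 := by
    intro p hp
    funext l
    have := congrFun hx (⟨p, by simp [hp]⟩, l)
    simpa [Matrix.vecMul, dotProduct, fromBlocks_transpose] using this
  -- x ∘ Sum.inr = 0
  have h00 := hx' 0 (by omega)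
  rw [pow_zero, Matrix.one_mul, vecMul_fromBlocks] at h00
  have hxr : x ∘ Sum.inr = 0 := by
    funext j
    have := congrFun h00 (Sum.inr j)
    simpa using this
  -- the key estimates
  have key : ∀ p : Fin n, (x ∘ Sum.inl) ᵥ* (A₀ᵀ ^ (p : ℕ) * B) = 0 := by
    intro p
    obtain ⟨X, Y, hXY⟩ := pow_blocks A₀ᵀ Bᵀ (p : ℕ)
    have hp := hx' p (by omega)
    rw [hXY, fromBlocks_multiply, vecMul_fromBlocks] at hp
    funext j
    have := congrFun hp (Sum.inl j)
    simpa [hxr] using this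
  have hxl : x ∘ Sum.inl = 0 := by
    apply h
    funext pl
    obtain ⟨p, l⟩ := pl
    have := congrFun (key ⟨(p : ℕ), by simpa using p.isLt⟩) l
    simpa [Matrix.vecMul, dotProduct] using this
  funext i
  cases i with
  | inl i => exact congrFun hxl i
  | inr j => exact congrFun hxr j
end

section
/- Let Ã ∈ ℝ^{N×N} be such that 0 is an eigenvalue of Ã with algebraic multiplicity 1 and every nonzero complex eigenvalue of Ã has negative real part, and let ψ, φ ∈ ℝ^N satisfy Ãψ = 0, φᵀÃ = 0 and φᵀψ = 1. Let K̂ ∈ ℝ^{N×M}, and let Ŵ ∈ ℝ^{M×M} be a matrix all of whose complex eigenvalues have negative real part. Set M̂ = [[Ã, −K̂],[0, Ŵ]]. Then for all x̄₀ ∈ ℝ^N and e₀ ∈ ℝ^M, exp(tM̂)·[x̄₀; e₀] converges as t → ∞ to (φᵀ(x̄₀ + K̂Ŵ⁻¹e₀))·[ψ; 0_M]. -/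
/-!
Complexify and split `ℂⁿ` into generalized eigenspaces of the matrix `B`. On the generalized
eigenspace of `μ ≠ 0` we have `exp(tB) w = e^{tμ} p(t)` for a vector polynomial `p`, which tends
to `0` because `Re μ < 0`, and `φ` annihilates that eigenspace because `φ (B - μ)ᵏ = (-μ)ᵏ φ`.
Since `0` is algebraically simple, its generalized eigenspace is the line through `ψ`, which
`exp(tB)` fixes; so the limit is `(φ ⬝ᵥ v) ψ`. The block matrix `M̂` satisfies the same
hypotheses as `Ã`: `[ψ; 0]` and `[φ; φᵀK̂Ŵ⁻¹]` are right and left null vectors, `0` stays simple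
because `Ŵ` is invertible, and an eigenvalue of the block triangular `M̂` is one of `Ã` or of `Ŵ`.
-/

open Matrix Filter Topology NormedSpace

theorem Complex.tendsto_exp_mul_mul_pow_atTop {μ : ℂ} (hμ : μ.re < 0) (j : ℕ) :
    Tendsto (fun t : ℝ => Complex.exp (t * μ) * (t : ℂ) ^ j) atTop (𝓝 0) := by
  rw [tendsto_zero_iff_norm_tendsto_zero]
  refine (tendsto_rpow_mul_exp_neg_mul_atTop_nhds_zero j (-μ.re) (neg_pos.2 hμ)).congr' ?_
  filter_upwards [eventually_ge_atTop 0] with t ht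
  rw [norm_mul, norm_pow, Complex.norm_exp, Complex.norm_of_nonneg ht, Real.rpow_natCast,
    neg_neg, mul_comm, Complex.re_ofReal_mul, mul_comm t]

namespace Matrix

section Exponential

variable {n : Type*} [Fintype n] [DecidableEq n]

theorem hasSum_exp {𝕂 : Type*} [RCLike 𝕂] (N : Matrix n n 𝕂) :
    HasSum (fun j => (j.factorial : 𝕂)⁻¹ • N ^ j) (exp N) := by
  open scoped Norms.Operator in exact exp_series_hasSum_exp' N

theorem exp_mulVec_eq_sum_of_pow_mulVec_eq_zero {𝕂 : Type*} [RCLike 𝕂] (N : Matrix n n 𝕂)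
    {w : n → 𝕂} {k : ℕ} (hw : N ^ k *ᵥ w = 0) :
    exp N *ᵥ w = ∑ j ∈ Finset.range k, (j.factorial : 𝕂)⁻¹ • (N ^ j *ᵥ w) := by
  have hsum : HasSum (fun j => (j.factorial : 𝕂)⁻¹ • (N ^ j *ᵥ w)) (exp N *ᵥ w) := by
    simpa only [Function.comp_def, mulVec.addMonoidHomLeft, AddMonoidHom.coe_mk,
      ZeroHom.coe_mk, smul_mulVec] using (hasSum_exp N).map
        (mulVec.addMonoidHomLeft w) (continuous_id.matrix_mulVec continuous_const)
  refine hsum.unique (hasSum_sum_of_ne_finset_zero fun j hj => ?_)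
  rw [Finset.mem_range, not_lt] at hj
  rw [← Nat.sub_add_cancel hj, pow_add, ← mulVec_mulVec, hw, mulVec_zero, smul_zero]

theorem exp_smul_one (z : ℂ) : exp (z • (1 : Matrix n n ℂ)) = Complex.exp z • 1 := by
  have h : algebraMap ℂ (Matrix n n ℂ) (exp z) = exp (algebraMap ℂ (Matrix n n ℂ) z) := by
    open scoped Norms.Operator in exact algebraMap_exp_comm z
  rwa [Algebra.algebraMap_eq_smul_one, Algebra.algebraMap_eq_smul_one, ← Complex.exp_eq_exp_ℂ,
    eq_comm] at h

theorem exp_smul_mulVec_of_pow_mulVec_eq_zero (B : Matrix n n ℂ) (c μ : ℂ) {w : n → ℂ} {k : ℕ}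
    (hw : (B - μ • 1) ^ k *ᵥ w = 0) :
    exp (c • B) *ᵥ w = ∑ j ∈ Finset.range k,
      (Complex.exp (c * μ) * c ^ j * (j.factorial : ℂ)⁻¹) • ((B - μ • 1) ^ j *ᵥ w) := by
  have hsplit : c • B = (c * μ) • (1 : Matrix n n ℂ) + c • (B - μ • 1) := by
    rw [smul_sub, smul_smul, add_sub_cancel]
  have hnil : (c • (B - μ • 1)) ^ k *ᵥ w = 0 := by rw [smul_pow, smul_mulVec, hw, smul_zero]
  rw [hsplit, exp_add_of_commute _ _ (((Commute.one_left _).smul_left _).smul_right _),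
    ← mulVec_mulVec, exp_mulVec_eq_sum_of_pow_mulVec_eq_zero _ hnil, exp_smul_one, smul_mulVec,
    one_mulVec, Finset.smul_sum]
  refine Finset.sum_congr rfl fun j _ => ?_
  rw [smul_pow, smul_mulVec, smul_smul, smul_smul]
  ring_nf

theorem tendsto_exp_smul_mulVec_of_pow_mulVec_eq_zero (B : Matrix n n ℂ) {μ : ℂ}
    (hμ : μ.re < 0) {w : n → ℂ} {k : ℕ} (hw : (B - μ • 1) ^ k *ᵥ w = 0) :
    Tendsto (fun t : ℝ => exp ((t : ℂ) • B) *ᵥ w) atTop (𝓝 0) := by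
  simp_rw [exp_smul_mulVec_of_pow_mulVec_eq_zero B _ μ hw]
  rw [← Finset.sum_const_zero (s := Finset.range k)]
  refine tendsto_finsetSum _ fun j _ => ?_
  simpa using ((Complex.tendsto_exp_mul_mul_pow_atTop hμ j).mul_const _).smul_const
    ((B - μ • 1) ^ j *ᵥ w)


section Field

variable {K : Type*} [Field K]

theorem mem_maxGenEigenspace_toLin'_iff (B : Matrix n n K) (μ : K) (w : n → K) :
    w ∈ Module.End.maxGenEigenspace (toLin' B) μ ↔ ∃ k : ℕ, (B - μ • 1) ^ k *ᵥ w = 0 := by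
  have h : ∀ k : ℕ, (toLin' B - μ • 1) ^ k = toLin' ((B - μ • 1) ^ k) := fun k => by
    rw [toLin'_pow, map_sub, map_smul, toLin'_one, Module.End.one_eq_id]
  simp only [Module.End.mem_maxGenEigenspace, h, toLin'_apply]

theorem maxGenEigenspace_toLin'_zero_eq_span (B : Matrix n n K) {Ψ : n → K} (hΨ : B *ᵥ Ψ = 0)
    (hΨ0 : Ψ ≠ 0) (hmult : B.charpoly.rootMultiplicity 0 = 1) :
    Module.End.maxGenEigenspace (toLin' B) 0 = K ∙ Ψ := by
  refine (Submodule.eq_of_le_of_finrank_le ?_ ?_).symm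
  · rw [Submodule.span_singleton_le_iff_mem, mem_maxGenEigenspace_toLin'_iff]
    exact ⟨1, by simpa using hΨ⟩
  · rw [LinearMap.finrank_maxGenEigenspace_eq, Matrix.charpoly_toLin', hmult,
      finrank_span_singleton hΨ0]

theorem vecMul_pow_sub_smul_of_vecMul_eq_zero {B : Matrix n n K} {Φ : n → K} (hΦ : Φ ᵥ* B = 0)
    (μ : K) (k : ℕ) :
    Φ ᵥ* (B - μ • 1) ^ k = (-μ) ^ k • Φ := by
  induction k with
  | zero => simp
  | succ k ih =>
    rw [pow_succ, ← vecMul_vecMul, ih, smul_vecMul, vecMul_sub, hΦ, vecMul_smul, vecMul_one]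
    module

theorem dotProduct_eq_zero_of_pow_sub_smul_mulVec_eq_zero {B : Matrix n n K} {Φ w : n → K}
    (hΦ : Φ ᵥ* B = 0) {μ : K} (hμ : μ ≠ 0) {k : ℕ} (hw : (B - μ • 1) ^ k *ᵥ w = 0) :
    Φ ⬝ᵥ w = 0 := by
  have h : (-μ) ^ k * (Φ ⬝ᵥ w) = 0 := by
    rw [← smul_eq_mul, ← smul_dotProduct, ← vecMul_pow_sub_smul_of_vecMul_eq_zero hΦ,
      ← dotProduct_mulVec, hw, dotProduct_zero]
  exact (mul_eq_zero.1 h).resolve_left (pow_ne_zero _ (neg_ne_zero.2 hμ))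

theorem exists_mulVec_eq_smul_of_mem_maxGenEigenspace {B : Matrix n n K} {μ : K} {w : n → K}
    (hw : w ∈ Module.End.maxGenEigenspace (toLin' B) μ) (hw0 : w ≠ 0) :
    ∃ u : n → K, u ≠ 0 ∧ B *ᵥ u = μ • u := by
  have hμ : Module.End.HasEigenvalue (toLin' B) μ :=
    (Module.End.hasUnifEigenvalue_iff_hasUnifEigenvalue_one (by simp)).1
      ((Submodule.ne_bot_iff _).2 ⟨w, hw, hw0⟩)
  obtain ⟨u, hu, hu0⟩ := hμ.exists_hasEigenvector
  exact ⟨u, hu0, by rw [← toLin'_apply]; exact Module.End.mem_eigenspace_iff.1 hu⟩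

end Field

theorem tendsto_exp_ofReal_smul_mulVec_of_simple_zero (B : Matrix n n ℂ) {Ψ Φ : n → ℂ}
    (hΨ : B *ᵥ Ψ = 0) (hΦ : Φ ᵥ* B = 0) (hpair : Φ ⬝ᵥ Ψ = 1)
    (hmult : B.charpoly.rootMultiplicity 0 = 1)
    (hneg : ∀ μ : ℂ, μ ≠ 0 → (∃ u : n → ℂ, u ≠ 0 ∧ B *ᵥ u = μ • u) → μ.re < 0) (v : n → ℂ) :
    Tendsto (fun t : ℝ => exp ((t : ℂ) • B) *ᵥ v) atTop (𝓝 ((Φ ⬝ᵥ v) • Ψ)) := by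
  have hΨ0 : Ψ ≠ 0 := by rintro rfl; simp at hpair
  have hv : v ∈ ⨆ μ, Module.End.maxGenEigenspace (toLin' B) μ := by
    rw [Module.End.iSup_maxGenEigenspace_eq_top]; trivial
  induction hv using Submodule.iSup_induction' with
  | mem μ w hw =>
    obtain rfl | hμ := eq_or_ne μ 0
    · rw [maxGenEigenspace_toLin'_zero_eq_span B hΨ hΨ0 hmult] at hw
      obtain ⟨c, rfl⟩ := Submodule.mem_span_singleton.1 hw
      have hfix : ∀ t : ℝ, exp ((t : ℂ) • B) *ᵥ (c • Ψ) = c • Ψ := fun t => by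
        simpa using exp_smul_mulVec_of_pow_mulVec_eq_zero B t 0 (w := c • Ψ) (k := 1)
          (by simp [mulVec_smul, hΨ])
      simp only [hfix, dotProduct_smul, hpair, smul_eq_mul, mul_one]
      exact tendsto_const_nhds
    obtain rfl | hw0 := eq_or_ne w 0
    · simp
    obtain ⟨k, hk⟩ := (mem_maxGenEigenspace_toLin'_iff B μ w).1 hw
    rw [dotProduct_eq_zero_of_pow_sub_smul_mulVec_eq_zero hΦ hμ hk, zero_smul]
    exact tendsto_exp_smul_mulVec_of_pow_mulVec_eq_zero B
      (hneg μ hμ (exists_mulVec_eq_smul_of_mem_maxGenEigenspace hw hw0)) hk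
  | zero => simp
  | add x y _ _ hx hy => simpa only [mulVec_add, dotProduct_add, add_smul] using hx.add hy

theorem exp_map_ofReal (A : Matrix n n ℝ) :
    exp (A.map Complex.ofReal) = (exp A).map Complex.ofReal := by
  have hcont : Continuous (Complex.ofRealHom.mapMatrix : Matrix n n ℝ →+* Matrix n n ℂ) :=
    continuous_id.matrix_map Complex.continuous_ofReal
  open scoped Norms.Operator in exact (map_exp _ hcont A).symm

theorem tendsto_exp_smul_mulVec_of_simple_zero (A : Matrix n n ℝ) {ψ φ : n → ℝ}
    (hψ : A *ᵥ ψ = 0) (hφ : φ ᵥ* A = 0) (hpair : φ ⬝ᵥ ψ = 1)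
    (hmult : A.charpoly.rootMultiplicity 0 = 1)
    (hneg : ∀ μ : ℂ, μ ≠ 0 →
      (∃ u : n → ℂ, u ≠ 0 ∧ A.map Complex.ofReal *ᵥ u = μ • u) → μ.re < 0) (x : n → ℝ) :
    Tendsto (fun t : ℝ => exp (t • A) *ᵥ x) atTop (𝓝 ((φ ⬝ᵥ x) • ψ)) := by
  let f := algebraMap ℝ ℂ
  have hcplx := tendsto_exp_ofReal_smul_mulVec_of_simple_zero (A.map Complex.ofReal)
    (Ψ := Complex.ofReal ∘ ψ) (Φ := Complex.ofReal ∘ φ)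
    (by ext i; simpa [f, hψ] using (f.map_mulVec A ψ i).symm)
    (by ext i; simpa [f, hφ] using (f.map_vecMul A φ i).symm)
    (by simpa [f, hpair] using (f.map_dotProduct φ ψ).symm)
    (by rw [← Complex.coe_algebraMap, charpoly_map, ← map_zero f,
      ← Polynomial.eq_rootMultiplicity_map Complex.ofReal_injective, hmult])
    hneg (Complex.ofReal ∘ x)
  have hreal : Tendsto (fun t : ℝ => Complex.ofReal ∘ (exp (t • A) *ᵥ x)) atTop
      (𝓝 (Complex.ofReal ∘ ((φ ⬝ᵥ x) • ψ))) := by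
    convert hcplx using 2 with t
    · ext i
      rw [show (t : ℂ) • A.map Complex.ofReal = (t • A).map Complex.ofReal by ext; simp,
        exp_map_ofReal]
      simpa [f] using f.map_mulVec (exp (t • A)) x i
    · ext i
      simpa [f] using congrArg (· * (ψ i : ℂ)) (f.map_dotProduct φ x)
  exact tendsto_pi_nhds.2 fun i =>
    Complex.isometry_ofReal.isEmbedding.tendsto_nhds_iff.2 (tendsto_pi_nhds.1 hreal i)

end Exponential

section Blocks

variable {n m : Type*} [Fintype n] [Fintype m]

theorem exists_eigenvector_of_fromBlocks_zero₂₁ {R : Type*} [CommRing R] {A : Matrix n n R}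
    {K : Matrix n m R} {D : Matrix m m R} {μ : R} {u : n ⊕ m → R} (hu0 : u ≠ 0)
    (hu : fromBlocks A K 0 D *ᵥ u = μ • u) :
    (∃ v, v ≠ 0 ∧ A *ᵥ v = μ • v) ∨ (∃ v, v ≠ 0 ∧ D *ᵥ v = μ • v) := by
  have hupper : A *ᵥ (u ∘ Sum.inl) + K *ᵥ (u ∘ Sum.inr) = μ • (u ∘ Sum.inl) :=
    funext fun i => by simpa [fromBlocks_mulVec] using congrFun hu (.inl i)
  have hlower : D *ᵥ (u ∘ Sum.inr) = μ • (u ∘ Sum.inr) :=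
    funext fun i => by simpa [fromBlocks_mulVec] using congrFun hu (.inr i)
  by_cases h2 : u ∘ Sum.inr = 0
  · refine .inl ⟨u ∘ Sum.inl, fun h1 => hu0 ?_, ?_⟩
    · rw [← Sum.elim_comp_inl_inr u, h1, h2]; ext (i | i) <;> rfl
    · simpa [h2] using hupper
  · exact .inr ⟨u ∘ Sum.inr, h2, by simpa using hlower⟩

variable [DecidableEq n]

theorem isUnit_det_of_forall_re_neg (W : Matrix n n ℝ)
    (hW : ∀ μ : ℂ, (∃ v : n → ℂ, v ≠ 0 ∧ W.map Complex.ofReal *ᵥ v = μ • v) → μ.re < 0) :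
    IsUnit W.det := by
  refine isUnit_iff_ne_zero.2 fun hdet => ?_
  have hdetℂ : (W.map Complex.ofReal).det = 0 := by
    rw [← Complex.coe_algebraMap, ← RingHom.mapMatrix_apply, ← RingHom.map_det, hdet, map_zero]
  obtain ⟨v, hv0, hv⟩ := exists_mulVec_eq_zero_iff.2 hdetℂ
  exact (hW 0 ⟨v, hv0, by rw [hv, zero_smul]⟩).false

variable [DecidableEq m]

theorem rootMultiplicity_zero_charpoly_fromBlocks_zero₂₁ {K : Type*} [Field K]
    (A : Matrix n n K) (B : Matrix n m K) {D : Matrix m m K} (hD : IsUnit D.det) :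
    (fromBlocks A B 0 D).charpoly.rootMultiplicity 0 = A.charpoly.rootMultiplicity 0 := by
  have hD0 : ¬ D.charpoly.IsRoot 0 := by
    rw [Polynomial.IsRoot, eval_charpoly, map_zero, zero_sub, det_neg]
    exact mul_ne_zero (pow_ne_zero _ (neg_ne_zero.2 one_ne_zero)) hD.ne_zero
  rw [charpoly_fromBlocks_zero₂₁, Polynomial.rootMultiplicity_mul
    (mul_ne_zero A.charpoly_monic.ne_zero D.charpoly_monic.ne_zero),
    Polynomial.rootMultiplicity_eq_zero hD0, add_zero]

end Blocks

end Matrix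

/-- Let `Ã` have `0` as an algebraically simple eigenvalue with all nonzero eigenvalues of
negative real part, right/left eigenvectors `ψ, φ` normalized by `φᵀψ = 1`, and `Ŵ` Hurwitz.
Then for `M̂ = [[Ã, −K̂],[0, Ŵ]]`, `exp(tM̂)[x̄₀; e₀] → (φᵀ(x̄₀ + K̂Ŵ⁻¹e₀))·[ψ; 0]`. -/
theorem block_matrix_exp_convergence {N M : ℕ}
    (Atil : Matrix (Fin N) (Fin N) ℝ)
    (hmult : Atil.charpoly.rootMultiplicity 0 = 1)
    (hnegA : ∀ μ : ℂ, μ ≠ 0 →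
      (∃ v : Fin N → ℂ, v ≠ 0 ∧ Atil.map (Complex.ofReal) *ᵥ v = μ • v) → μ.re < 0)
    (ψ φ : Fin N → ℝ) (hψ : Atil *ᵥ ψ = 0) (hφ : φ ᵥ* Atil = 0) (hpair : φ ⬝ᵥ ψ = 1)
    (Khat : Matrix (Fin N) (Fin M) ℝ) (What : Matrix (Fin M) (Fin M) ℝ)
    (hW : ∀ μ : ℂ, (∃ v : Fin M → ℂ, v ≠ 0 ∧ What.map (Complex.ofReal) *ᵥ v = μ • v) →
      μ.re < 0)
    (Mhat : Matrix (Fin N ⊕ Fin M) (Fin N ⊕ Fin M) ℝ)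
    (hM : Mhat = Matrix.fromBlocks Atil (-Khat) 0 What)
    (x0 : Fin N → ℝ) (e0 : Fin M → ℝ) :
    Tendsto (fun t : ℝ => NormedSpace.exp (t • Mhat) *ᵥ Sum.elim x0 e0) atTop
      (𝓝 ((φ ⬝ᵥ (x0 + (Khat * What⁻¹) *ᵥ e0)) • Sum.elim ψ (0 : Fin M → ℝ))) := by
  subst hM
  have hWdet := isUnit_det_of_forall_re_neg What hW
  have key := tendsto_exp_smul_mulVec_of_simple_zero (fromBlocks Atil (-Khat) 0 What)
    (ψ := Sum.elim ψ 0) (φ := Sum.elim φ (φ ᵥ* (Khat * What⁻¹)))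
    (by simp [fromBlocks_mulVec, hψ])
    (by simp [vecMul_fromBlocks, hφ, vecMul_vecMul, Matrix.mul_assoc, nonsing_inv_mul _ hWdet,
      vecMul_neg])
    (by simpa [sumElim_dotProduct_sumElim] using hpair)
    (by rwa [rootMultiplicity_zero_charpoly_fromBlocks_zero₂₁ _ _ hWdet])
    (fun μ hμ hev => by
      rw [fromBlocks_map, Matrix.map_zero _ Complex.ofReal_zero] at hev
      obtain ⟨u, hu0, hu⟩ := hev
      rcases exists_eigenvector_of_fromBlocks_zero₂₁ hu0 hu with h | h
      exacts [hnegA μ hμ h, hW μ h])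
    (Sum.elim x0 e0)
  simpa [sumElim_dotProduct_sumElim, dotProduct_add, dotProduct_mulVec] using key
end
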